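/- arXiv:1811.01455 — 2 statements merged into one kernel-verified Lean document; each statement's English description precedes it below -/
import Mathlib

section
/- The specialized Euler matrix 𝔈 is invertible with inverse 𝔈^{−1} = 𝓓; furthermore, for every k ∈ ℕ with k ≥ 1, the matrix 𝓔^{(k)}(k/2) is invertible with inverse [𝓔^{(k)}(k/2)]^{−1} = 𝓓^k. -/
noncomputable section

/-- `E α x k` is the generalized Euler polynomial `E_k^{(α)}(x)`, characterized by the
generating function `(2/(e^z+1))^α e^{xz} = Σ_k E_k^{(α)}(x) z^k / k!` for `|z| < π`. -/
def IsGenEulerFamily (E : ℝ → ℝ → ℕ → ℝ) : Prop :=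
  ∀ α x z : ℝ, |z| < Real.pi →
    HasSum (fun k : ℕ => E α x k * z ^ k / (Nat.factorial k : ℝ))
      ((2 / (Real.exp z + 1)) ^ α * Real.exp (x * z))

/-- The generalized `(n+1)×(n+1)` Euler matrix `𝓔^{(α)}(x)`, with `(i,j)` entry
`C(i,j) E_{i-j}^{(α)}(x)` (which is `0` for `j > i` since then `C(i,j) = 0`). -/
def genEulerMatrix (E : ℝ → ℝ → ℕ → ℝ) (n : ℕ) (α x : ℝ) :
    Matrix (Fin (n + 1)) (Fin (n + 1)) ℝ :=
  Matrix.of fun i j => (Nat.choose (i : ℕ) (j : ℕ) : ℝ) * E α x ((i : ℕ) - (j : ℕ))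

/-- The matrix `𝓓`, with `(i,j)` entry `(1+(-1)^(i-j)) C(i,j) 2^(j-i-1)`
(which is `0` for `j > i` since then `C(i,j) = 0`). -/
def Dmatrix (n : ℕ) : Matrix (Fin (n + 1)) (Fin (n + 1)) ℝ :=
  Matrix.of fun i j =>
    (1 + (-1 : ℝ) ^ ((i : ℤ) - (j : ℤ))) * (Nat.choose (i : ℕ) (j : ℕ) : ℝ) *
      (2 : ℝ) ^ ((j : ℤ) - (i : ℤ) - 1)

/-! The generating function `(2/(e^z+1))^α e^{xz}` is multiplicative in `(α, x)`, and the
lower-triangular matrices `(C(i,j) a_{i-j})` multiply by binomial convolution of their sequences,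
i.e. by the product of exponential generating functions. Uniqueness of power-series coefficients
therefore makes `(α, x) ↦ 𝓔^{(α)}(x)` a homomorphism from `(ℝ², +)` to matrices with
`𝓔^{(0)}(0) = 1`. Since `(e^z+1)/2 · e^{-z/2} = cosh (z/2)`, also `𝓓 = 𝓔^{(-1)}(-1/2)`, so
`𝓓^k = 𝓔^{(-k)}(-k/2)` is the inverse of `𝓔^{(k)}(k/2)`. -/

open Finset

section BinomialMatrix

variable {R : Type*} [CommSemiring R]

def binomialMatrix (n : ℕ) (a : ℕ → R) : Matrix (Fin (n + 1)) (Fin (n + 1)) R :=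
  Matrix.of fun i j => ((i : ℕ).choose j : R) * a (i - j)

def binomialConv (a b : ℕ → R) (m : ℕ) : R :=
  ∑ t ∈ range (m + 1), (m.choose t : R) * a (m - t) * b t

theorem Nat.choose_mul_choose_eq_zero {i l j : ℕ} (h : ¬(j ≤ l ∧ l ≤ i)) :
    i.choose l * l.choose j = 0 := by
  rcases not_and_or.mp h with h | h
  · rw [Nat.choose_eq_zero_of_lt (not_le.mp h), mul_zero]
  · rw [Nat.choose_eq_zero_of_lt (not_le.mp h), zero_mul]

theorem binomialMatrix_mul (n : ℕ) (a b : ℕ → R) :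
    binomialMatrix n a * binomialMatrix n b = binomialMatrix n (binomialConv a b) := by
  ext i j
  set f : ℕ → R := fun l => ((i.1.choose l * l.choose j : ℕ) : R) * (a (i - l) * b (l - j))
  have hf : ∀ l, ¬(j.1 ≤ l ∧ l ≤ i) → f l = 0 := fun l hl => by
    simp only [f, Nat.choose_mul_choose_eq_zero hl, Nat.cast_zero, zero_mul]
  calc (binomialMatrix n a * binomialMatrix n b) i j = ∑ l : Fin (n + 1), f l := by
        simp only [binomialMatrix, Matrix.mul_apply, Matrix.of_apply, f, Nat.cast_mul]
        exact sum_congr rfl fun l _ => by ring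
    _ = ∑ l ∈ range (n + 1), f l := Fin.sum_univ_eq_sum_range f (n + 1)
    _ = ∑ l ∈ Ico (j : ℕ) (i + 1), f l := by
        refine (sum_subset (fun l hl => ?_) fun l _ hl => hf l ?_).symm
        · simp only [mem_Ico, mem_range] at hl ⊢
          omega
        · simpa [Nat.lt_succ_iff] using hl
    _ = binomialMatrix n (binomialConv a b) i j := by
        obtain hji | hij := le_or_gt (j : ℕ) i
        · rw [sum_Ico_eq_sum_range, show (i : ℕ) + 1 - j = i - j + 1 by omega]
          simp only [binomialMatrix, Matrix.of_apply, binomialConv, mul_sum]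
          refine sum_congr rfl fun t ht => ?_
          simp only [f]
          rw [Nat.choose_mul (Nat.le_add_right _ t), Nat.add_sub_cancel_left,
            show (i : ℕ) - (j + t) = i - j - t by omega, Nat.cast_mul]
          ring
        · rw [Ico_eq_empty (by omega), sum_empty]
          simp [binomialMatrix, Nat.choose_eq_zero_of_lt hij]

theorem binomialMatrix_ite_zero (n : ℕ) :
    binomialMatrix n (fun k => if k = 0 then (1 : R) else 0) = 1 := by
  ext i j
  simp only [binomialMatrix, Matrix.of_apply, Matrix.one_apply, Fin.ext_iff]
  rcases lt_trichotomy (i : ℕ) j with h | h | h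
  · simp [Nat.choose_eq_zero_of_lt h, h.ne]
  · simp [h]
  · simp [h.ne', Nat.sub_ne_zero_of_lt h]

end BinomialMatrix

theorem coeff_eq_zero_of_hasSum_pow_eq_zero {c : ℕ → ℝ} {r : ℝ} (hr : 0 < r)
    (h : ∀ z : ℝ, |z| < r → HasSum (fun k => c k * z ^ k) 0) : c = 0 := by
  obtain ⟨ρ, hρ0, hρr⟩ := exists_between (Real.toNNReal_pos.mpr hr)
  replace hρr : (ρ : ℝ) < r := Real.lt_toNNReal_iff_coe_lt.mp hρr
  set p := FormalMultilinearSeries.ofScalars ℝ c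
  have hradius : (ρ : ENNReal) ≤ p.radius := by
    refine p.le_radius_of_summable_norm ?_
    simpa [p, FormalMultilinearSeries.ofScalars_norm, abs_mul, abs_pow] using
      (h ρ (by simpa using hρr)).summable.abs
  have hp : HasFPowerSeriesOnBall 0 p 0 ρ :=
    { r_le := hradius
      r_pos := by simpa using hρ0
      hasSum := fun {z} hz => by
        have hz : |z| < r := by
          have := enorm_lt_coe.mp (mem_eball_zero_iff.mp hz)
          rw [← NNReal.coe_lt_coe, coe_nnnorm, Real.norm_eq_abs] at this
          exact this.trans hρr
        simpa [p, FormalMultilinearSeries.ofScalars_apply_eq, mul_comm] using h z hz }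
  simpa [p] using hp.hasFPowerSeriesAt.eq_zero

theorem hasSum_sum_range_mul {f g : ℕ → ℝ} {A B : ℝ} (hf : HasSum f A) (hg : HasSum g B) :
    HasSum (fun n => ∑ k ∈ range (n + 1), f k * g (n - k)) (A * B) := by
  simpa [hf.tsum_eq, hg.tsum_eq] using
    hasSum_sum_range_mul_of_summable_norm hf.summable.norm hg.summable.norm

theorem eq_of_hasSum_pow_div_factorial {a b : ℕ → ℝ} {S : ℝ → ℝ} {r : ℝ} (hr : 0 < r)
    (ha : ∀ z : ℝ, |z| < r → HasSum (fun k => a k * z ^ k / k.factorial) (S z))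
    (hb : ∀ z : ℝ, |z| < r → HasSum (fun k => b k * z ^ k / k.factorial) (S z)) : a = b := by
  have h := coeff_eq_zero_of_hasSum_pow_eq_zero (c := fun k => (a k - b k) / k.factorial) hr
    fun z hz => by simpa [sub_div, sub_mul, div_mul_eq_mul_div] using (ha z hz).sub (hb z hz)
  funext k
  simpa [sub_eq_zero, Nat.factorial_ne_zero] using congrFun h k

namespace IsGenEulerFamily

variable {E : ℝ → ℝ → ℕ → ℝ}

theorem eq_of_hasSum (hE : IsGenEulerFamily E) {α x : ℝ} {b : ℕ → ℝ}
    (hb : ∀ z : ℝ, |z| < Real.pi → HasSum (fun k => b k * z ^ k / k.factorial)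
      ((2 / (Real.exp z + 1)) ^ α * Real.exp (x * z))) : E α x = b :=
  eq_of_hasSum_pow_div_factorial Real.pi_pos (hE α x) hb

theorem add_add (hE : IsGenEulerFamily E) (α β x y : ℝ) :
    E (α + β) (x + y) = binomialConv (E α x) (E β y) := by
  refine hE.eq_of_hasSum fun z hz => ?_
  have hprod := hasSum_sum_range_mul (hE β y z hz) (hE α x z hz)
  have hval : (2 / (Real.exp z + 1)) ^ β * Real.exp (y * z) *
      ((2 / (Real.exp z + 1)) ^ α * Real.exp (x * z)) =
      (2 / (Real.exp z + 1)) ^ (α + β) * Real.exp ((x + y) * z) := by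
    rw [Real.rpow_add (by positivity), add_mul, Real.exp_add]
    ring
  rw [hval] at hprod
  refine hprod.congr_fun fun m => ?_
  simp only [binomialConv, sum_mul, sum_div]
  refine sum_congr rfl fun t ht => ?_
  have ht : t ≤ m := Nat.lt_succ_iff.mp (mem_range.mp ht)
  rw [Nat.cast_choose ℝ ht, ← Nat.sub_add_cancel ht, pow_add]
  simp only [Nat.add_sub_cancel]
  field_simp

theorem zero_zero (hE : IsGenEulerFamily E) : E 0 0 = fun k => if k = 0 then 1 else 0 := by
  refine hE.eq_of_hasSum fun z _ => ?_
  simp only [Real.rpow_zero, zero_mul, Real.exp_zero, one_mul]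
  refine (hasSum_ite_eq 0 (1 : ℝ)).congr_fun fun k => ?_
  rcases k with _ | k <;> simp

theorem neg_one_neg_half (hE : IsGenEulerFamily E) :
    E (-1) (-(1 / 2)) = fun k => (1 + (-1) ^ k) / 2 ^ (k + 1) := by
  refine hE.eq_of_hasSum fun z _ => ?_
  have hval : (2 / (Real.exp z + 1)) ^ (-1 : ℝ) * Real.exp (-(1 / 2) * z) =
      (Real.exp (z / 2) + Real.exp (-(z / 2))) / 2 := by
    rw [Real.rpow_neg_one, inv_div, div_mul_eq_mul_div, add_mul, ← Real.exp_add]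
    ring_nf
  rw [hval, Real.exp_eq_exp_ℝ]
  refine ((NormedSpace.expSeries_div_hasSum_exp (z / 2)).add
    (NormedSpace.expSeries_div_hasSum_exp (-(z / 2)))).div_const 2 |>.congr_fun fun k => ?_
  rw [neg_pow (z / 2), div_pow z, pow_succ]
  field_simp

end IsGenEulerFamily

section GenEulerMatrix

variable {E : ℝ → ℝ → ℕ → ℝ} (n : ℕ)

theorem genEulerMatrix_eq_binomialMatrix (α x : ℝ) :
    genEulerMatrix E n α x = binomialMatrix n (E α x) :=
  rfl

theorem genEulerMatrix_mul (hE : IsGenEulerFamily E) (α β x y : ℝ) :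
    genEulerMatrix E n α x * genEulerMatrix E n β y = genEulerMatrix E n (α + β) (x + y) := by
  simp only [genEulerMatrix_eq_binomialMatrix, binomialMatrix_mul, hE.add_add]

theorem genEulerMatrix_zero_zero (hE : IsGenEulerFamily E) : genEulerMatrix E n 0 0 = 1 := by
  rw [genEulerMatrix_eq_binomialMatrix, hE.zero_zero, binomialMatrix_ite_zero]

theorem genEulerMatrix_mul_neg (hE : IsGenEulerFamily E) (α x : ℝ) :
    genEulerMatrix E n α x * genEulerMatrix E n (-α) (-x) = 1 := by
  rw [genEulerMatrix_mul n hE, add_neg_cancel, add_neg_cancel, genEulerMatrix_zero_zero n hE]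

theorem genEulerMatrix_neg_mul (hE : IsGenEulerFamily E) (α x : ℝ) :
    genEulerMatrix E n (-α) (-x) * genEulerMatrix E n α x = 1 := by
  simpa using genEulerMatrix_mul_neg n hE (-α) (-x)

theorem Dmatrix_eq_genEulerMatrix (hE : IsGenEulerFamily E) :
    Dmatrix n = genEulerMatrix E n (-1) (-(1 / 2)) := by
  ext i j
  simp only [Dmatrix, genEulerMatrix, Matrix.of_apply, hE.neg_one_neg_half]
  obtain hji | hij := le_or_gt (j : ℕ) i
  · obtain ⟨d, hd⟩ := Nat.exists_eq_add_of_le hji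
    rw [hd, Nat.add_sub_cancel_left, Nat.cast_add, show (j : ℤ) + d - j = d by ring,
      show (j : ℤ) - (j + d) - 1 = -((d + 1 : ℕ) : ℤ) by push_cast; ring, zpow_neg,
      zpow_natCast, zpow_natCast]
    ring
  · simp [Nat.choose_eq_zero_of_lt hij]

theorem Dmatrix_pow (hE : IsGenEulerFamily E) (k : ℕ) :
    Dmatrix n ^ k = genEulerMatrix E n (-k) (-(k / 2)) := by
  induction k with
  | zero => simpa using (genEulerMatrix_zero_zero n hE).symm
  | succ k ih =>
    rw [pow_succ, ih, Dmatrix_eq_genEulerMatrix n hE, genEulerMatrix_mul n hE]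
    congr 1 <;> push_cast <;> ring

end GenEulerMatrix

theorem specialized_euler_matrix_inverse (E : ℝ → ℝ → ℕ → ℝ) (hE : IsGenEulerFamily E)
    (n : ℕ) :
    (genEulerMatrix E n 1 (1 / 2) * Dmatrix n = 1 ∧
     Dmatrix n * genEulerMatrix E n 1 (1 / 2) = 1) ∧
    ∀ k : ℕ, 1 ≤ k →
      genEulerMatrix E n (k : ℝ) ((k : ℝ) / 2) * (Dmatrix n) ^ k = 1 ∧
      (Dmatrix n) ^ k * genEulerMatrix E n (k : ℝ) ((k : ℝ) / 2) = 1 := by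
  have inverse_pow (k : ℕ) :
      genEulerMatrix E n k (k / 2) * Dmatrix n ^ k = 1 ∧
      Dmatrix n ^ k * genEulerMatrix E n k (k / 2) = 1 := by
    rw [Dmatrix_pow n hE]
    exact ⟨genEulerMatrix_mul_neg n hE _ _, genEulerMatrix_neg_mul n hE _ _⟩
  exact ⟨by simpa using inverse_pow 1, fun k _ => inverse_pow k⟩
end
end

section
/- For every real α and real x: (i) for every n ∈ ℕ with n ≥ 2, E^{(α)}_n(x) = L_{n+1} + (x − α/2 − 3)·L_n + Σ_{k=2}^{n} (E^{(α)}_k(x) − 3·E^{(α)}_{k−1}(x))·L_{n−k+1} + 5·Σ_{k=2}^{n} Σ_{s=0}^{k−2} (−1)^{k−s}·2^{k−s−2}·L_{n−k+1}·E^{(α)}_s(x); and (ii) for every n ∈ ℕ with n ≥ 3, n·E^{(α)}_{n−1}(x) = L_n + (2x − α − 3)·L_{n−1} + Σ_{k=3}^{n} (k·E^{(α)}_{k−1}(x) − 3(k−1)·E^{(α)}_{k−2}(x))·L_{n−k+1} + 5·Σ_{k=3}^{n} Σ_{s=1}^{k−2} (−1)^{k−s}·2^{k−s−2}·s·L_{n−k+1}·E^{(α)}_{s−1}(x).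 -/
noncomputable section

/-- The Lucas sequence: `L_1 = 1`, `L_2 = 3`, `L_{m+2} = L_{m+1} + L_m` (so `L_0 = 2`). -/
def lucasSeq : ℕ → ℕ
  | 0 => 2
  | 1 => 1
  | m + 2 => lucasSeq (m + 1) + lucasSeq m

open Filter Topology FormalMultilinearSeries PowerSeries Finset

/-!
The Lucas numbers have `Σ_m L_{m+1} t^m = (1 + 2t) / (1 - t - t²)`, with reciprocal
`(1 - t - t²) / (1 + 2t) = 1 - 3t + 5 Σ_{j ≥ 2} (-2)^{j-2} t^j`. Multiplying the generating
function of any sequence `a` by this reciprocal and then by the Lucas series gives back `a`;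
comparing coefficients is identity (i) with `a` in place of `E_k^{(α)}(x)`. The Euler polynomials
enter only through `E_0 = 1` and `E_1 = x - α/2`, the value and the derivative at `0` of their
generating function, and (ii) is the same expansion of `a_k = k E_{k-1}`, for which `a_0 = 0`.
-/

theorem hasFPowerSeriesAt_ofScalars_of_hasSum {𝕜 : Type*} [NontriviallyNormedField 𝕜]
    {c : ℕ → 𝕜} {f : 𝕜 → 𝕜} {R : ℝ} (hR : 0 < R)
    (hf : ∀ z : 𝕜, ‖z‖ < R → HasSum (fun k => c k * z ^ k) (f z)) :
    HasFPowerSeriesAt f (ofScalars 𝕜 c) 0 := by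
  obtain ⟨w, hw0, hwR⟩ := NormedField.exists_norm_lt 𝕜 hR
  refine ⟨‖w‖₊, ⟨?_, by simpa using hw0, fun {z} hz => ?_⟩⟩
  · refine (ofScalars 𝕜 c).le_radius_of_tendsto (l := 0) ?_
    simpa using (hf w hwR).summable.tendsto_atTop_zero.norm
  · have hzw : ‖z‖ < ‖w‖ := by simpa using hz
    simpa [ofScalars_apply_eq, mul_comm] using hf z (hzw.trans hwR)

def eulerGenFun (α x z : ℝ) : ℝ := (2 / (Real.exp z + 1)) ^ α * Real.exp (x * z)

theorem eulerGenFun_zero (α x : ℝ) : eulerGenFun α x 0 = 1 := by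
  norm_num [eulerGenFun]

theorem hasDerivAt_eulerGenFun_zero (α x : ℝ) :
    HasDerivAt (eulerGenFun α x) (x - α / 2) 0 := by
  have hbase : HasDerivAt (fun z => 2 / (Real.exp z + 1)) (-(1 / 2)) 0 := by
    refine ((hasDerivAt_const (0 : ℝ) (2 : ℝ)).div ((Real.hasDerivAt_exp 0).add_const 1)
      (by positivity)).congr_deriv ?_
    norm_num
  have hpow := hbase.rpow_const (p := α) (Or.inl (by norm_num))
  have hexp := ((hasDerivAt_id (0 : ℝ)).const_mul x).exp
  refine (hpow.mul hexp).congr_deriv ?_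
  norm_num
  ring

namespace IsGenEulerFamily

variable {E : ℝ → ℝ → ℕ → ℝ}

theorem hasFPowerSeriesAt (hE : IsGenEulerFamily E) (α x : ℝ) :
    HasFPowerSeriesAt (eulerGenFun α x) (ofScalars ℝ fun k => E α x k / k.factorial) 0 :=
  hasFPowerSeriesAt_ofScalars_of_hasSum Real.pi_pos fun z hz => by
    simp_rw [div_mul_eq_mul_div]
    exact hE α x z hz

theorem apply_zero (hE : IsGenEulerFamily E) (α x : ℝ) : E α x 0 = 1 := by
  simpa [eulerGenFun_zero] using ((hE.hasFPowerSeriesAt α x).coeff_zero fun _ => 0)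

theorem apply_one (hE : IsGenEulerFamily E) (α x : ℝ) : E α x 1 = x - α / 2 := by
  simpa [ofScalars_apply_eq] using
    (hE.hasFPowerSeriesAt α x).hasDerivAt.unique (hasDerivAt_eulerGenFun_zero α x)

end IsGenEulerFamily

def lucasInvCoeff {R : Type*} [CommRing R] : ℕ → R
  | 0 => 1
  | 1 => -3
  | j + 2 => 5 * (-2) ^ j

section

variable (R : Type*) [CommRing R]

def lucasShiftSeries : R⟦X⟧ := mk fun m => (lucasSeq (m + 1) : R)

def lucasInvSeries : R⟦X⟧ := mk lucasInvCoeff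

theorem one_sub_X_sub_X_sq_mul_lucasShiftSeries :
    (1 - X - X ^ 2) * lucasShiftSeries R = 1 + 2 * X := by
  ext (_ | _ | n) <;>
    simp [lucasShiftSeries, sub_mul, coeff_X_pow_mul', lucasSeq, mul_comm X, two_mul, coeff_X]
  ring

theorem one_add_two_mul_X_mul_lucasInvSeries :
    (1 + 2 * X) * lucasInvSeries R = 1 - X - X ^ 2 := by
  ext (_ | _ | _ | n) <;>
    simp [lucasInvSeries, add_mul, lucasInvCoeff, mul_comm X, two_mul, coeff_X] <;> ring

end

section

variable {R : Type*} [CommRing R]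

theorem lucasInvSeries_mul_lucasShiftSeries : lucasInvSeries R * lucasShiftSeries R = 1 := by
  have hunit : IsUnit (1 + 2 * X : R⟦X⟧) := by simp [isUnit_iff_constantCoeff]
  refine hunit.mul_left_cancel ?_
  rw [← mul_assoc, one_add_two_mul_X_mul_lucasInvSeries,
    one_sub_X_sub_X_sq_mul_lucasShiftSeries, mul_one]

theorem coeff_mul_lucasShiftSeries (f : R⟦X⟧) (n : ℕ) :
    coeff n (f * lucasShiftSeries R)
      = ∑ k ∈ range (n + 1), coeff k f * lucasSeq (n - k + 1) := by
  simp [coeff_mul, Finset.Nat.sum_antidiagonal_eq_sum_range_succ_mk, lucasShiftSeries]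

theorem coeff_mk_mul_lucasInvSeries (a : ℕ → R) {k : ℕ} (hk : 2 ≤ k) :
    coeff k (mk a * lucasInvSeries R) = a k - 3 * a (k - 1)
      + 5 * ∑ s ∈ Icc 0 (k - 2), (-1) ^ (k - s) * 2 ^ (k - s - 2) * a s := by
  obtain ⟨m, rfl⟩ := Nat.exists_eq_add_of_le' hk
  have hinv : ∀ s ∈ range (m + 1), coeff s (mk a) * coeff (m + 2 - s) (lucasInvSeries R)
      = 5 * ((-1) ^ (m + 2 - s) * 2 ^ (m + 2 - s - 2) * a s) := by
    intro s _
    rw [show m + 2 - s = (m - s) + 2 by grind, Nat.add_sub_cancel]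
    simp only [lucasInvSeries, coeff_mk, lucasInvCoeff, neg_pow (2 : R)]
    ring
  rw [coeff_mul, Finset.Nat.sum_antidiagonal_eq_sum_range_succ_mk, sum_range_succ,
    sum_range_succ, sum_congr rfl hinv, Nat.add_sub_cancel, ← Nat.range_succ_eq_Icc_zero, mul_sum]
  simp only [coeff_mk, lucasInvSeries, lucasInvCoeff, show m + 2 - (m + 1) = 1 by omega,
    show m + 2 - 1 = m + 1 by omega, Nat.sub_self]
  ring

theorem eq_lucas_expansion (a : ℕ → R) {n : ℕ} (hn : 1 ≤ n) :
    a n = a 0 * lucasSeq (n + 1) + (a 1 - 3 * a 0) * lucasSeq n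
      + ∑ k ∈ Icc 2 n, (a k - 3 * a (k - 1)) * lucasSeq (n - k + 1)
      + 5 * ∑ k ∈ Icc 2 n, ∑ s ∈ Icc 0 (k - 2),
          (-1) ^ (k - s) * 2 ^ (k - s - 2) * (lucasSeq (n - k + 1) : R) * a s := by
  have hsplit : range (n + 1) = insert 0 (insert 1 (Icc 2 n)) := by
    ext k
    simp only [mem_range, mem_insert, mem_Icc]
    omega
  have h0 : coeff 0 (mk a * lucasInvSeries R) = a 0 := by
    simp [lucasInvSeries, lucasInvCoeff]
  have h1 : coeff 1 (mk a * lucasInvSeries R) = a 1 - 3 * a 0 := by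
    simp only [coeff_mul, Finset.Nat.sum_antidiagonal_succ, Finset.Nat.antidiagonal_zero,
      sum_singleton, lucasInvSeries, coeff_mk, lucasInvCoeff]
    ring
  have hterm : ∀ k ∈ Icc 2 n, coeff k (mk a * lucasInvSeries R) * lucasSeq (n - k + 1)
      = (a k - 3 * a (k - 1)) * lucasSeq (n - k + 1) + 5 * ∑ s ∈ Icc 0 (k - 2),
          (-1) ^ (k - s) * 2 ^ (k - s - 2) * (lucasSeq (n - k + 1) : R) * a s := by
    intro k hk
    rw [coeff_mk_mul_lucasInvSeries a (mem_Icc.1 hk).1, add_mul, mul_assoc, sum_mul]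
    congr 2
    exact sum_congr rfl fun s _ => mul_right_comm _ _ _
  calc a n = coeff n (mk a * lucasInvSeries R * lucasShiftSeries R) := by
        rw [mul_assoc, lucasInvSeries_mul_lucasShiftSeries, mul_one, coeff_mk]
    _ = _ := by
      rw [coeff_mul_lucasShiftSeries, hsplit, sum_insert (by simp), sum_insert (by simp), h0, h1,
        sum_congr rfl hterm, sum_add_distrib, mul_sum, Nat.sub_zero, Nat.sub_add_cancel hn]
      ring

theorem eq_lucas_expansion_of_apply_zero (a : ℕ → R) (ha : a 0 = 0) {n : ℕ} (hn : 3 ≤ n) :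
    a n = a 1 * lucasSeq n + (a 2 - 3 * a 1) * lucasSeq (n - 1)
      + ∑ k ∈ Icc 3 n, (a k - 3 * a (k - 1)) * lucasSeq (n - k + 1)
      + 5 * ∑ k ∈ Icc 3 n, ∑ s ∈ Icc 1 (k - 2),
          (-1) ^ (k - s) * 2 ^ (k - s - 2) * (lucasSeq (n - k + 1) : R) * a s := by
  have hdrop (f : ℕ → R) (m : ℕ) (hf : f 0 = 0) :
      ∑ s ∈ Icc 0 m, f s = ∑ s ∈ Icc 1 m, f s := by
    rw [← insert_Icc_add_one_left_eq_Icc (Nat.zero_le m), sum_insert (by simp), hf, zero_add]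
    rfl
  have h2 : Icc 2 n = insert 2 (Icc 3 n) := (insert_Icc_add_one_left_eq_Icc (by omega)).symm
  rw [eq_lucas_expansion a (by omega), h2, sum_insert (by simp), sum_insert (by simp),
    sum_congr rfl fun k _ => hdrop _ _ (by rw [ha, mul_zero]), show n - 2 + 1 = n - 1 by omega,
    Nat.sub_self, Icc_self, sum_singleton, show 2 - 1 = 1 from rfl, ha]
  ring

end

theorem euler_lucas_identity (E : ℝ → ℝ → ℕ → ℝ) (hE : IsGenEulerFamily E) (α x : ℝ) :
    (∀ n : ℕ, 2 ≤ n →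
      E α x n
        = (lucasSeq (n + 1) : ℝ) + (x - α / 2 - 3) * (lucasSeq n : ℝ)
          + ∑ k ∈ Finset.Icc 2 n,
              (E α x k - 3 * E α x (k - 1)) * (lucasSeq (n - k + 1) : ℝ)
          + 5 * ∑ k ∈ Finset.Icc 2 n, ∑ s ∈ Finset.Icc 0 (k - 2),
              (-1 : ℝ) ^ (k - s) * 2 ^ (k - s - 2) * (lucasSeq (n - k + 1) : ℝ) *
                E α x s) ∧
    (∀ n : ℕ, 3 ≤ n →
      (n : ℝ) * E α x (n - 1)
        = (lucasSeq n : ℝ) + (2 * x - α - 3) * (lucasSeq (n - 1) : ℝ)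
          + ∑ k ∈ Finset.Icc 3 n,
              ((k : ℝ) * E α x (k - 1) - 3 * ((k : ℝ) - 1) * E α x (k - 2)) *
                (lucasSeq (n - k + 1) : ℝ)
          + 5 * ∑ k ∈ Finset.Icc 3 n, ∑ s ∈ Finset.Icc 1 (k - 2),
              (-1 : ℝ) ^ (k - s) * 2 ^ (k - s - 2) * (s : ℝ) *
                (lucasSeq (n - k + 1) : ℝ) * E α x (s - 1)) := by
  have hE0 := hE.apply_zero α x
  have hE1 := hE.apply_one α x
  refine ⟨fun n hn => ?_, fun n hn => ?_⟩
  · rw [eq_lucas_expansion (E α x) (by omega), hE0, hE1]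
    ring
  · rw [eq_lucas_expansion_of_apply_zero (fun k => (k : ℝ) * E α x (k - 1)) (by simp) hn]
    congr 1
    · congr 1
      · rw [show E α x (1 - 1) = 1 from hE0, show E α x (2 - 1) = x - α / 2 from hE1]
        push_cast
        ring
      · refine sum_congr rfl fun k hk => ?_
        rw [Nat.cast_sub (by grind), Nat.sub_sub, Nat.cast_one]
        ring
    · congr 1
      exact sum_congr rfl fun k _ => sum_congr rfl fun s _ => by ring
end
end
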